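/- arXiv:1911.12803 — 3 statements merged into one kernel-verified Lean document; each statement's English description precedes it below -/
import Mathlib

section
/- Let γ = (x(t), y(t)), with x(t), y(t) ∈ ℂ[[t]] of positive order and not both zero, be a primitive formal parametrization, and suppose there exists φ ∈ ℂ[[t]] with φ(0) = 0 and φ'(0) ≠ 0 such that x(t)^∨ = x(φ(t)) and y(t)^∨ = y(φ(t)) (the branch parametrized by γ is fixed by the anti-holomorphic involution J). Then there exists ψ ∈ ℂ[[t]] with ψ(0) = 0 and ψ'(0) ≠ 0 such that all coefficients of x(ψ(t)) and of y(ψ(t)) are real; that is, a J-fixed formal branch admits a parametrization with real coefficients. -/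
open PowerSeries

/-- Coefficientwise complex conjugation on one-variable formal power series, `g ↦ g^∨`. -/
noncomputable def psConj : PowerSeries ℂ → PowerSeries ℂ :=
  PowerSeries.map (starRingEnd ℂ)

/-- Substitution `g(h(t))` of a one-variable formal power series `h` with zero constant
term into a one-variable formal power series `g`.  (For `h` of positive order, the
coefficient of `t^n` only involves coefficients of `g` of index `≤ n`, so the finite sum
below computes the substitution.) -/
noncomputable def substOne (g h : PowerSeries ℂ) : PowerSeries ℂ :=
  PowerSeries.mk fun n =>
    ∑ i ∈ Finset.range (n + 1),
      PowerSeries.coeff i g * PowerSeries.coeff n (h ^ i)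

/-- A pair `(x(t), y(t))` is a primitive parametrization if it cannot be written as
`(x̃(h(t)), ỹ(h(t)))` for some pair `(x̃, ỹ)` and some `h` of order at least `2`. -/
def Primitive (x y : PowerSeries ℂ) : Prop :=
  ¬ ∃ (x' y' h : PowerSeries ℂ), 2 ≤ h.order ∧ x = substOne x' h ∧ y = substOne y' h

/-
Conjugating `x^∨ = x ∘ φ` gives `x = x ∘ σ` with `σ = φ ∘ φ^∨`. A reparametrization fixing a
nonconstant series has a root of unity as linear coefficient, and `σ'(0) = |φ'(0)|² > 0`, so `σ`
is tangent to the identity; comparing the first coefficient where `x ∘ σ` and `x` could differ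
then forces `σ = t`. Hence `φ^∨ ∘ φ = t`, and `χ = a t + ā φ^∨` satisfies `χ^∨ = χ ∘ φ`. Its
compositional inverse `ψ` satisfies `φ ∘ ψ^∨ = ψ`, so `(x ∘ ψ)^∨ = x ∘ φ ∘ ψ^∨ = x ∘ ψ` is real.
-/

namespace PowerSeries

variable {R : Type*} [CommRing R]

theorem coeff_subst_eq_sum_range {a : R⟦X⟧} (ha : constantCoeff a = 0) (f : R⟦X⟧) (n : ℕ) :
    coeff n (f.subst a) = ∑ i ∈ Finset.range (n + 1), coeff i f * coeff n (a ^ i) := by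
  rw [coeff_subst' (HasSubst.of_constantCoeff_zero' ha)]
  simp only [smul_eq_mul]
  refine finsum_eq_sum_of_support_subset _ fun i hi => ?_
  rw [Finset.mem_coe, Finset.mem_range]
  by_contra hin
  have hXi : X ^ i ∣ a ^ i := pow_dvd_pow_of_dvd (X_dvd_iff.2 ha) i
  exact hi (show coeff i f * coeff n (a ^ i) = 0 by
    rw [X_pow_dvd_iff.1 hXi n (by omega), mul_zero])

theorem coeff_subst_X_mul (f s : R⟦X⟧) (n : ℕ) :
    coeff n (f.subst (X * s)) =
      ∑ i ∈ Finset.range (n + 1), coeff i f * coeff (n - i) (s ^ i) := by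
  rw [coeff_subst_eq_sum_range (by simp)]
  refine Finset.sum_congr rfl fun i hi => ?_
  rw [mul_pow, coeff_X_pow_mul', if_pos (by simp at hi; omega)]

theorem coeff_subst_X_mul_of_forall_lt {f : R⟦X⟧} {n : ℕ} (hf : ∀ i < n, coeff i f = 0)
    (s : R⟦X⟧) : coeff n (f.subst (X * s)) = coeff n f * coeff 0 s ^ n := by
  rw [coeff_subst_X_mul, Finset.sum_eq_single_of_mem n (by simp)]
  · simp
  · intro i hi hin
    rw [hf i (by simp at hi; omega), zero_mul]

theorem exists_coeff_ne_zero_forall_lt {f : R⟦X⟧} (hf : f ≠ 0) :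
    ∃ n, coeff n f ≠ 0 ∧ ∀ i < n, coeff i f = 0 := by
  obtain ⟨n, hn⟩ := ENat.ne_top_iff_exists.1 (order_finite_iff_ne_zero.2 hf).ne
  exact ⟨n, order_eq_nat.1 hn.symm⟩

theorem coeff_pow_sub_one_of_X_pow_dvd {s : R⟦X⟧} {k : ℕ} (hk : k ≠ 0) (hs : X ^ k ∣ s - 1)
    (i : ℕ) :
    coeff k (s ^ i - 1) = (i : R) * coeff k (s - 1) := by
  obtain ⟨r, hr⟩ := sq_dvd_add_pow_sub_sub (s - 1) 1 i
  have hsq : X ^ (k + 1) ∣ (s - 1) ^ 2 * r := by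
    refine (dvd_trans ?_ (pow_dvd_pow_of_dvd hs 2)).mul_right r
    rw [← pow_mul]
    exact pow_dvd_pow X (by omega)
  have hexp : s ^ i - 1 = C (i : R) * (s - 1) + (s - 1) ^ 2 * r := by
    rw [map_natCast, ← hr]; ring
  rw [hexp, map_add, coeff_C_mul, X_pow_dvd_iff.1 hsq k (by omega), add_zero]

variable [IsDomain R]

theorem isOfFinOrder_coeff_one_of_subst_eq_self {f σ : R⟦X⟧} (hf : f ≠ 0)
    (hf0 : constantCoeff f = 0) (hσ : constantCoeff σ = 0) (hfix : f.subst σ = f) :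
    IsOfFinOrder (coeff 1 σ) := by
  obtain ⟨s, rfl⟩ := X_dvd_iff.2 hσ
  obtain ⟨n, hn, hlow⟩ := exists_coeff_ne_zero_forall_lt hf
  have hn0 : n ≠ 0 := by rintro rfl; exact hn (by simpa using hf0)
  have hlead := coeff_subst_X_mul_of_forall_lt hlow s
  rw [hfix, eq_comm, mul_eq_left₀ hn] at hlead
  exact isOfFinOrder_iff_pow_eq_one.2 ⟨n, Nat.pos_of_ne_zero hn0, by simpa using hlead⟩

theorem eq_X_of_subst_eq_self [CharZero R] {f σ : R⟦X⟧} (hf : f ≠ 0)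
    (hf0 : constantCoeff f = 0) (hσ : constantCoeff σ = 0) (hσ1 : coeff 1 σ = 1)
    (hfix : f.subst σ = f) : σ = X := by
  obtain ⟨s, rfl⟩ := X_dvd_iff.2 hσ
  suffices s = 1 by rw [this, mul_one]
  by_contra hs
  obtain ⟨n, hn, hflow⟩ := exists_coeff_ne_zero_forall_lt hf
  obtain ⟨k, hk, hslow⟩ := exists_coeff_ne_zero_forall_lt (sub_ne_zero.2 hs)
  have hn0 : n ≠ 0 := by rintro rfl; exact hn (by simpa using hf0)
  have hk0 : k ≠ 0 := by rintro rfl; exact hk (by simpa [sub_eq_zero] using hσ1)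
  have hdvd : X ^ k ∣ s - 1 := X_pow_dvd_iff.2 hslow
  have hdiff : coeff (n + k) (f.subst (X * s)) - coeff (n + k) (f.subst (X * 1)) =
      n * coeff n f * coeff k (s - 1) := by
    rw [coeff_subst_X_mul, coeff_subst_X_mul, ← Finset.sum_sub_distrib,
      Finset.sum_eq_single_of_mem n (by simp)]
    · rw [one_pow, ← mul_sub, ← map_sub, Nat.add_sub_cancel_left,
        coeff_pow_sub_one_of_X_pow_dvd hk0 hdvd]
      ring
    · intro i hi hin
      rcases Nat.lt_or_gt_of_ne hin with hlt | hgt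
      · rw [hflow i hlt, zero_mul, zero_mul, sub_zero]
      · rw [one_pow, ← mul_sub, ← map_sub, X_pow_dvd_iff.1
          (hdvd.trans (sub_one_dvd_pow_sub_one s i)) _ (by omega), mul_zero]
  rw [mul_one, X_subst, hfix, sub_self] at hdiff
  exact mul_ne_zero (mul_ne_zero (Nat.cast_ne_zero.2 hn0) hn) hk hdiff.symm

end PowerSeries

open ComplexConjugate

theorem substOne_eq_subst (g : ℂ⟦X⟧) {h : ℂ⟦X⟧} (h0 : coeff 0 h = 0) :
    substOne g h = g.subst h := by
  ext n
  rw [substOne, coeff_mk, coeff_subst_eq_sum_range (by rwa [← coeff_zero_eq_constantCoeff_apply])]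

theorem hasSubst_of_coeff_zero {a : ℂ⟦X⟧} (ha : coeff 0 a = 0) : HasSubst a :=
  HasSubst.of_constantCoeff_zero' (by rwa [← coeff_zero_eq_constantCoeff_apply])

theorem coeff_zero_substOne (g a : ℂ⟦X⟧) : coeff 0 (substOne g a) = coeff 0 g := by
  simp [substOne]

theorem coeff_one_substOne (g a : ℂ⟦X⟧) : coeff 1 (substOne g a) = coeff 1 g * coeff 1 a := by
  simp [substOne, Finset.sum_range_succ]

theorem substOne_substOne (g : ℂ⟦X⟧) {a b : ℂ⟦X⟧} (ha : coeff 0 a = 0) (hb : coeff 0 b = 0) :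
    substOne (substOne g a) b = substOne g (substOne a b) := by
  have hab : coeff 0 (substOne a b) = 0 := by rwa [coeff_zero_substOne]
  rw [substOne_eq_subst g hab, substOne_eq_subst (substOne g a) hb, substOne_eq_subst g ha,
    substOne_eq_subst a hb]
  exact subst_comp_subst_apply (hasSubst_of_coeff_zero ha) (hasSubst_of_coeff_zero hb) g

theorem X_substOne {a : ℂ⟦X⟧} (ha : coeff 0 a = 0) : substOne X a = a := by
  rw [substOne_eq_subst X ha, subst_X (hasSubst_of_coeff_zero ha)]

theorem substOne_X (g : ℂ⟦X⟧) : substOne g X = g := by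
  rw [substOne_eq_subst g (by simp), X_subst]

theorem coeff_psConj (g : ℂ⟦X⟧) (n : ℕ) : coeff n (psConj g) = conj (coeff n g) :=
  coeff_map _ _ _

theorem psConj_psConj (g : ℂ⟦X⟧) : psConj (psConj g) = g := by
  ext n
  simp [coeff_psConj]

theorem psConj_X : psConj X = X :=
  map_X _

theorem psConj_substOne (g : ℂ⟦X⟧) {a : ℂ⟦X⟧} (ha : coeff 0 a = 0) :
    psConj (substOne g a) = substOne (psConj g) (psConj a) := by
  rw [substOne_eq_subst g ha, substOne_eq_subst _ (by rw [coeff_psConj, ha, map_zero])]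
  exact map_subst (hasSubst_of_coeff_zero ha) g

theorem im_coeff_eq_zero_of_psConj_eq_self {g : ℂ⟦X⟧} (hg : psConj g = g) (n : ℕ) :
    (coeff n g).im = 0 := by
  rw [← Complex.conj_eq_iff_im, ← coeff_psConj, hg]

theorem exists_add_conj_mul_ne_zero (c : ℂ) : ∃ a : ℂ, a + conj a * c ≠ 0 := by
  by_contra! h
  have h1 := h 1
  have hI := h Complex.I
  simp only [map_one, one_mul, Complex.conj_I] at h1 hI
  have : c = -1 := by linear_combination h1
  rw [this] at hI
  simp at hI

section JFixed

variable {φ : ℂ⟦X⟧} (hφ : coeff 0 φ = 0)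
include hφ

theorem substOne_substOne_psConj_eq_self {g : ℂ⟦X⟧} (hg : psConj g = substOne g φ) :
    substOne g (substOne φ (psConj φ)) = g := by
  rw [← substOne_substOne g hφ (by rw [coeff_psConj, hφ, map_zero]), ← hg,
    ← psConj_substOne _ hφ, ← hg, psConj_psConj]

theorem substOne_psConj_eq_X {g : ℂ⟦X⟧} (hg0 : coeff 0 g = 0) (hg : g ≠ 0)
    (hgφ : psConj g = substOne g φ) : substOne (psConj φ) φ = X := by
  set σ := substOne φ (psConj φ)
  have hσ0 : coeff 0 σ = 0 := by rw [coeff_zero_substOne, hφ]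
  have hfix : g.subst σ = g := by
    rw [← substOne_eq_subst g hσ0, substOne_substOne_psConj_eq_self hφ hgφ]
  have hσ0' : constantCoeff σ = 0 := by rwa [← coeff_zero_eq_constantCoeff_apply]
  have hg0' : constantCoeff g = 0 := by rwa [← coeff_zero_eq_constantCoeff_apply]
  -- `σ'(0) = |φ'(0)|²` is a nonnegative real root of unity.
  have hσ1 : coeff 1 σ = 1 := by
    obtain ⟨n, hn, hpow⟩ := isOfFinOrder_iff_pow_eq_one.1
      (isOfFinOrder_coeff_one_of_subst_eq_self hg hg0' hσ0' hfix)
    rw [coeff_one_substOne, coeff_psConj, Complex.mul_conj] at hpow ⊢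
    norm_cast at hpow ⊢
    exact (pow_eq_one_iff_of_nonneg (Complex.normSq_nonneg _) hn.ne').1 hpow
  have hσX := congrArg psConj (eq_X_of_subst_eq_self hg hg0' hσ0' hσ1 hfix)
  rwa [psConj_substOne _ (by rw [coeff_psConj, hφ, map_zero]), psConj_psConj, psConj_X] at hσX

-- `χ = a t + ā φ^∨(t)` works because `φ^∨ ∘ φ = t`; `a` only has to make `χ'(0) ≠ 0`.
theorem exists_psConj_eq_substOne (hinv : substOne (psConj φ) φ = X) :
    ∃ χ : ℂ⟦X⟧, constantCoeff χ = 0 ∧ IsUnit (coeff 1 χ) ∧ psConj χ = substOne χ φ := by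
  obtain ⟨a, ha⟩ := exists_add_conj_mul_ne_zero (conj (coeff 1 φ))
  have hφs := hasSubst_of_coeff_zero hφ
  refine ⟨a • X + conj a • psConj φ, ?_, ?_, ?_⟩
  · rw [← coeff_zero_eq_constantCoeff_apply, map_add, coeff_smul, coeff_smul, coeff_psConj, hφ]
    simp
  · simpa [coeff_psConj] using ha
  · rw [substOne_eq_subst _ hφ, subst_add hφs, subst_smul hφs, subst_smul hφs, subst_X hφs,
      ← substOne_eq_subst _ hφ, hinv]
    ext n
    simp only [map_add, coeff_smul, coeff_psConj, smul_eq_mul, map_mul, Complex.conj_conj]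
    rw [← coeff_psConj X, psConj_X, add_comm]

theorem substOne_psConj_substInv {χ : ℂ⟦X⟧} (hχ0 : constantCoeff χ = 0)
    (hχ1 : IsUnit (coeff 1 χ)) (hχ : psConj χ = substOne χ φ) :
    substOne φ (psConj (χ.substInvOfIsUnit hχ1)) = χ.substInvOfIsUnit hχ1 := by
  set ψ := χ.substInvOfIsUnit hχ1
  set τ := substOne φ (psConj ψ)
  have hχ0' : coeff 0 χ = 0 := by rwa [coeff_zero_eq_constantCoeff_apply]
  have hψ0 : coeff 0 ψ = 0 := by simp [ψ]
  have hψc0 : coeff 0 (psConj ψ) = 0 := by rw [coeff_psConj, hψ0, map_zero]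
  have hτ0 : coeff 0 τ = 0 := by rwa [coeff_zero_substOne]
  have hχψ : substOne χ ψ = X := by
    rw [substOne_eq_subst χ hψ0, subst_substInvOfIsUnit_right χ hχ0]
  have hψχ : substOne ψ χ = X := by
    rw [substOne_eq_subst ψ hχ0', subst_substInvOfIsUnit_left χ hχ0]
  have hχτ : substOne χ τ = X := by
    rw [← substOne_substOne χ hφ hψc0, ← hχ, ← psConj_substOne χ hψ0, hχψ, psConj_X]
  calc τ = substOne (substOne ψ χ) τ := by rw [hψχ, X_substOne hτ0]
    _ = ψ := by rw [substOne_substOne ψ hχ0' hτ0, hχτ, substOne_X]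

theorem psConj_substOne_substInv {g χ : ℂ⟦X⟧} (hχ0 : constantCoeff χ = 0)
    (hχ1 : IsUnit (coeff 1 χ)) (hχ : psConj χ = substOne χ φ) (hg : psConj g = substOne g φ) :
    psConj (substOne g (χ.substInvOfIsUnit hχ1)) = substOne g (χ.substInvOfIsUnit hχ1) := by
  have hψ0 : coeff 0 (χ.substInvOfIsUnit hχ1) = 0 := by simp
  rw [psConj_substOne g hψ0, hg, substOne_substOne g hφ (by rw [coeff_psConj, hψ0, map_zero]),
    substOne_psConj_substInv hφ hχ0 hχ1 hχ]

end JFixed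

theorem jFixed_branch_has_real_parametrization_general (x y : PowerSeries ℂ)
    (hx : PowerSeries.coeff 0 x = 0) (hy : PowerSeries.coeff 0 y = 0)
    (hne : ¬(x = 0 ∧ y = 0))
    (φ : PowerSeries ℂ) (hφ0 : PowerSeries.coeff 0 φ = 0)
    (hfx : psConj x = substOne x φ) (hfy : psConj y = substOne y φ) :
    ∃ ψ : PowerSeries ℂ, PowerSeries.coeff 0 ψ = 0 ∧ PowerSeries.coeff 1 ψ ≠ 0 ∧
      (∀ n, (PowerSeries.coeff n (substOne x ψ)).im = 0) ∧
      (∀ n, (PowerSeries.coeff n (substOne y ψ)).im = 0) := by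
  have hinv : substOne (psConj φ) φ = X := by
    rcases not_and_or.1 hne with hx0 | hy0
    · exact substOne_psConj_eq_X hφ0 hx hx0 hfx
    · exact substOne_psConj_eq_X hφ0 hy hy0 hfy
  obtain ⟨χ, hχ0, hχ1, hχ⟩ := exists_psConj_eq_substOne hφ0 hinv
  refine ⟨χ.substInvOfIsUnit hχ1, by simp, by simpa using hχ1.ne_zero, ?_, ?_⟩
  · exact im_coeff_eq_zero_of_psConj_eq_self (psConj_substOne_substInv hφ0 hχ0 hχ1 hχ hfx)
  · exact im_coeff_eq_zero_of_psConj_eq_self (psConj_substOne_substInv hφ0 hχ0 hχ1 hχ hfy)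

/-- a primitive formal branch fixed by the anti-holomorphic involution `J`
(i.e. `(x^∨, y^∨)` is a reparametrization of `(x, y)` by a formal diffeomorphism `φ`)
admits a parametrization with real coefficients: there is a formal diffeomorphism `ψ`
such that all coefficients of `x(ψ(t))` and `y(ψ(t))` are real. -/
theorem jFixed_branch_has_real_parametrization (x y : PowerSeries ℂ)
    (hx : PowerSeries.coeff 0 x = 0) (hy : PowerSeries.coeff 0 y = 0)
    (hne : ¬(x = 0 ∧ y = 0)) (hprim : Primitive x y)
    (φ : PowerSeries ℂ) (hφ0 : PowerSeries.coeff 0 φ = 0)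
    (hφ1 : PowerSeries.coeff 1 φ ≠ 0)
    (hfx : psConj x = substOne x φ) (hfy : psConj y = substOne y φ) :
    ∃ ψ : PowerSeries ℂ, PowerSeries.coeff 0 ψ = 0 ∧ PowerSeries.coeff 1 ψ ≠ 0 ∧
      (∀ n, (PowerSeries.coeff n (substOne x ψ)).im = 0) ∧
      (∀ n, (PowerSeries.coeff n (substOne y ψ)).im = 0) :=
  jFixed_branch_has_real_parametrization_general x y hx hy hne φ hφ0 hfx hfy
end

section
/- Let P, Q ∈ ℂ[[x,y]], and set A = u·P(x,ux) − Q(x,ux) and B = x·P(x,ux) in ℂ[[x,u]]. Let m ∈ ℕ and A₁, B₁ ∈ ℂ[[x,u]] be such that A = x^m·A₁ and B = x^m·B₁. Let x(t), u(t) ∈ ℂ[[t]] have zero constant term with x(t) ≠ 0, set y(t) = u(t)·x(t) and γ = (x(t),y(t)), and suppose T := (P∘γ)·y'(t) − (Q∘γ)·x'(t) is nonzero. Then ord T = m·ord x(t) + ord( A₁(x(t),u(t))·x'(t) + B₁(x(t),u(t))·u'(t) ). (This is the coordinate form of Proposition: for a formal branch Γ non-invariant by the foliation F and tangent to the x-axis,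 tg₀(F,Γ) = m·ν₀(Γ) + tg_q(F̃,Γ̃), where F̃, Γ̃ are the strict transforms under the blow-up of the origin, q is the point of Γ̃ on the exceptional divisor, and m = ν₀(F) if the blow-up is non-dicritical and m = ν₀(F)+1 if it is dicritical.) -/
open PowerSeries

/-- Coefficientwise complex conjugation on two-variable formal power series, `P ↦ P^∨`. -/
noncomputable def mvConj : MvPowerSeries (Fin 2) ℂ → MvPowerSeries (Fin 2) ℂ :=
  MvPowerSeries.map (starRingEnd ℂ)

/-- Substitution `P ∘ (a(t), b(t))` of a pair of one-variable formal power series with zero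
constant term into a two-variable formal power series `P(x,y)`.  (For `a, b` of positive
order, the coefficient of `t^n` only involves monomials `x^i y^j` of `P` with `i + j ≤ n`,
so the finite sum below computes the substitution.) -/
noncomputable def substPair (P : MvPowerSeries (Fin 2) ℂ) (a b : PowerSeries ℂ) :
    PowerSeries ℂ :=
  PowerSeries.mk fun n =>
    ∑ i ∈ Finset.range (n + 1), ∑ j ∈ Finset.range (n + 1),
      MvPowerSeries.coeff (Finsupp.single 0 i + Finsupp.single 1 j) P *
        PowerSeries.coeff n (a ^ i * b ^ j)

/-- The substitution `P(x, ux)` of the blow-up chart `π(x,u) = (x, ux)` into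
`P ∈ ℂ[[x,y]]`, as a formal power series in the variables `(x, u)`.  (Both substituted
series have positive order, so each coefficient is given by the finite sum below: the
coefficient of a monomial of total degree `n` in `x^i (ux)^j` only involves `i + j ≤ n`.) -/
noncomputable def blowupSubst (P : MvPowerSeries (Fin 2) ℂ) : MvPowerSeries (Fin 2) ℂ :=
  fun d : Fin 2 →₀ ℕ =>
    ∑ i ∈ Finset.range (d 0 + d 1 + 1), ∑ j ∈ Finset.range (d 0 + d 1 + 1),
      MvPowerSeries.coeff (Finsupp.single 0 i + Finsupp.single 1 j) P *
        MvPowerSeries.coeff d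
          (MvPowerSeries.X 0 ^ i * (MvPowerSeries.X 0 * MvPowerSeries.X 1) ^ j)

/-!
In the chart `π(x,u) = (x, ux)` the branch `γ = (x, ux)` is `π ∘ γ̃` with `γ̃ = (x, u)`, so the
pullback of `ω = P dy − Q dx` along `γ` is the pullback along `γ̃` of
`π^*ω = A dx + B du = x^m (A₁ dx + B₁ du)`. Hence `T = x(t)^m · (A₁(γ̃) x' + B₁(γ̃) u')`, and
the order of a product in `ℂ[[t]]` is the sum of the orders. Both `substPair` and
`blowupSubst` are instances of `MvPowerSeries.subst`, whose functoriality does the bookkeeping.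
-/

namespace MvPowerSeries

variable {τ R : Type*} [CommRing R]

theorem coeff_subst_fin_two {a : Fin 2 → MvPowerSeries τ R} (ha : HasSubst a)
    (f : MvPowerSeries (Fin 2) R) (e : τ →₀ ℕ) (N : ℕ)
    (hN : ∀ i j, N < i ∨ N < j → coeff e (a 0 ^ i * a 1 ^ j) = 0) :
    coeff e (subst a f) =
      ∑ i ∈ Finset.range (N + 1), ∑ j ∈ Finset.range (N + 1),
        coeff (Finsupp.single 0 i + Finsupp.single 1 j) f * coeff e (a 0 ^ i * a 1 ^ j) := by
  set mono : ℕ × ℕ → (Fin 2 →₀ ℕ) := fun p => Finsupp.single 0 p.1 + Finsupp.single 1 p.2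
  have prod_eq (d : Fin 2 →₀ ℕ) : (d.prod fun s k => a s ^ k) = a 0 ^ d 0 * a 1 ^ d 1 := by
    rw [Finsupp.prod_fintype _ _ (fun _ => pow_zero _), Fin.prod_univ_two]
  have mono_inj : Set.InjOn mono ↑(Finset.range (N + 1) ×ˢ Finset.range (N + 1)) :=
    fun p _ q _ h => Prod.ext (by simpa [mono] using congrArg (· 0) h)
      (by simpa [mono] using congrArg (· 1) h)
  rw [coeff_subst ha, finsum_eq_sum_of_support_subset _
      (s := (Finset.range (N + 1) ×ˢ Finset.range (N + 1)).image mono),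
    Finset.sum_image mono_inj, Finset.sum_product]
  · simp [mono, prod_eq]
  · intro d hd
    have hbox : d 0 ≤ N ∧ d 1 ≤ N := by
      by_contra h
      exact hd (by simp only [prod_eq]; rw [hN _ _ (by omega), smul_zero])
    refine Finset.mem_coe.mpr (Finset.mem_image.mpr ⟨(d 0, d 1), ?_, ?_⟩)
    · simp only [Finset.mem_product, Finset.mem_range]; omega
    · ext s; fin_cases s <;> simp [mono]

theorem hasSubst_blowup_chart :
    HasSubst (![X 0, X 0 * X 1] : Fin 2 → MvPowerSeries (Fin 2) R) :=
  hasSubst_of_constantCoeff_zero (Fin.forall_fin_two.mpr ⟨by simp, by simp⟩)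

end MvPowerSeries

theorem PowerSeries.coeff_pow_mul_pow_eq_zero {R : Type*} [CommSemiring R] {a b : R⟦X⟧}
    (ha : constantCoeff a = 0) (hb : constantCoeff b = 0) {i j n : ℕ} (h : n < i + j) :
    coeff n (a ^ i * b ^ j) = 0 := by
  have hdvd : X ^ (i + j) ∣ a ^ i * b ^ j := by
    rw [pow_add]
    exact mul_dvd_mul (pow_dvd_pow_of_dvd (X_dvd_iff.mpr ha) i)
      (pow_dvd_pow_of_dvd (X_dvd_iff.mpr hb) j)
  exact X_pow_dvd_iff.mp hdvd n h

theorem PowerSeries.hasSubst_pair {R : Type*} [CommRing R] {a b : R⟦X⟧}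
    (ha : constantCoeff a = 0) (hb : constantCoeff b = 0) : MvPowerSeries.HasSubst ![a, b] :=
  MvPowerSeries.hasSubst_of_constantCoeff_zero
    (Fin.forall_fin_two.mpr ⟨ha, hb⟩ : ∀ i, constantCoeff (![a, b] i) = 0)

theorem substPair_eq_subst (P : MvPowerSeries (Fin 2) ℂ) {a b : PowerSeries ℂ}
    (ha : constantCoeff a = 0) (hb : constantCoeff b = 0) :
    substPair P a b = MvPowerSeries.subst ![a, b] P := by
  ext n
  rw [substPair, coeff_mk, PowerSeries.coeff,
    MvPowerSeries.coeff_subst_fin_two (hasSubst_pair ha hb) P _ n]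
  · rfl
  · intro i j h
    exact coeff_pow_mul_pow_eq_zero ha hb (by omega)

theorem blowupSubst_eq_subst (P : MvPowerSeries (Fin 2) ℂ) :
    blowupSubst P
      = MvPowerSeries.subst ![MvPowerSeries.X 0, MvPowerSeries.X 0 * MvPowerSeries.X 1] P := by
  have chart_monomial (i j : ℕ) :
      (MvPowerSeries.X 0 : MvPowerSeries (Fin 2) ℂ) ^ i
          * (MvPowerSeries.X 0 * MvPowerSeries.X 1) ^ j
        = MvPowerSeries.monomial (Finsupp.single 0 (i + j) + Finsupp.single 1 j) 1 := by
    rw [mul_pow, ← mul_assoc, ← pow_add, MvPowerSeries.X_pow_eq, MvPowerSeries.X_pow_eq,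
      MvPowerSeries.monomial_mul_monomial, one_mul]
  ext d
  rw [MvPowerSeries.coeff_subst_fin_two MvPowerSeries.hasSubst_blowup_chart P d (d 0 + d 1)]
  · rfl
  · intro i j h
    simp only [Matrix.cons_val_zero, Matrix.cons_val_one]
    rw [chart_monomial, MvPowerSeries.coeff_monomial, if_neg]
    rintro rfl
    simp at h
    omega

theorem substPair_blowupSubst (P : MvPowerSeries (Fin 2) ℂ) {x u : PowerSeries ℂ}
    (hx : constantCoeff x = 0) (hu : constantCoeff u = 0) :
    substPair (blowupSubst P) x u = substPair P x (u * x) := by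
  have hxu := hasSubst_pair hx hu
  rw [substPair_eq_subst _ hx hu, substPair_eq_subst _ hx (by simp [hx]), blowupSubst_eq_subst,
    MvPowerSeries.subst_comp_subst_apply MvPowerSeries.hasSubst_blowup_chart hxu]
  congr 1
  funext s
  fin_cases s <;> simp [MvPowerSeries.subst_X hxu, MvPowerSeries.subst_mul hxu, mul_comm]

theorem tangency_series_blowup {P Q A₁ B₁ : MvPowerSeries (Fin 2) ℂ} {m : ℕ}
    (hA : MvPowerSeries.X 1 * blowupSubst P - blowupSubst Q = MvPowerSeries.X 0 ^ m * A₁)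
    (hB : MvPowerSeries.X 0 * blowupSubst P = MvPowerSeries.X 0 ^ m * B₁)
    {x u : PowerSeries ℂ} (hx : constantCoeff x = 0) (hu : constantCoeff u = 0) :
    substPair P x (u * x) * derivative ℂ (u * x) - substPair Q x (u * x) * derivative ℂ x
      = x ^ m * (substPair A₁ x u * derivative ℂ x + substPair B₁ x u * derivative ℂ u) := by
  have hxu := hasSubst_pair hx hu
  have pullback_A := congrArg (MvPowerSeries.subst ![x, u]) hA
  have pullback_B := congrArg (MvPowerSeries.subst ![x, u]) hB
  simp only [MvPowerSeries.subst_sub hxu, MvPowerSeries.subst_mul hxu,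
    MvPowerSeries.subst_pow hxu, MvPowerSeries.subst_X hxu, Matrix.cons_val_zero,
    Matrix.cons_val_one, ← substPair_eq_subst _ hx hu, substPair_blowupSubst _ hx hu]
    at pullback_A pullback_B
  rw [Derivation.leibniz, smul_eq_mul, smul_eq_mul]
  linear_combination derivative ℂ x * pullback_A + derivative ℂ u * pullback_B

theorem tangency_order_blowup_general (P Q : MvPowerSeries (Fin 2) ℂ) (m : ℕ)
    (A₁ B₁ : MvPowerSeries (Fin 2) ℂ)
    (hA : MvPowerSeries.X 1 * blowupSubst P - blowupSubst Q
        = MvPowerSeries.X 0 ^ m * A₁)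
    (hB : MvPowerSeries.X 0 * blowupSubst P = MvPowerSeries.X 0 ^ m * B₁)
    (x u : PowerSeries ℂ)
    (hx : PowerSeries.coeff 0 x = 0) (hu : PowerSeries.coeff 0 u = 0) :
    (substPair P x (u * x) * PowerSeries.derivativeFun (u * x)
        - substPair Q x (u * x) * PowerSeries.derivativeFun x).order
      = (m : ℕ∞) * x.order
        + (substPair A₁ x u * PowerSeries.derivativeFun x
            + substPair B₁ x u * PowerSeries.derivativeFun u).order := by
  rw [coeff_zero_eq_constantCoeff_apply] at hx hu
  -- `derivativeFun f` is definitionally `derivative ℂ f`.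
  calc _ = (x ^ m * (substPair A₁ x u * derivative ℂ x
            + substPair B₁ x u * derivative ℂ u)).order :=
        congrArg order (tangency_series_blowup hA hB hx hu)
    _ = _ := by rw [order_mul, order_pow, nsmul_eq_mul]; rfl

/-- with `A = u·P(x,ux) − Q(x,ux)`, `B = x·P(x,ux)`, suppose `A = x^m·A₁`
and `B = x^m·B₁`.  For `x(t), u(t)` of positive order with `x(t) ≠ 0`, `y = u·x`,
`γ = (x,y)`, if `T = (P∘γ)·y' − (Q∘γ)·x' ≠ 0` then
`ord T = m·ord x(t) + ord(A₁(x(t),u(t))·x' + B₁(x(t),u(t))·u')`.  This is the formula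
`tg₀(F,Γ) = m·ν₀(Γ) + tg_q(F̃,Γ̃)` for the blow-up of the origin. -/
theorem tangency_order_blowup (P Q : MvPowerSeries (Fin 2) ℂ) (m : ℕ)
    (A₁ B₁ : MvPowerSeries (Fin 2) ℂ)
    (hA : MvPowerSeries.X 1 * blowupSubst P - blowupSubst Q
        = MvPowerSeries.X 0 ^ m * A₁)
    (hB : MvPowerSeries.X 0 * blowupSubst P = MvPowerSeries.X 0 ^ m * B₁)
    (x u : PowerSeries ℂ)
    (hx : PowerSeries.coeff 0 x = 0) (hu : PowerSeries.coeff 0 u = 0)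
    (hxne : x ≠ 0)
    (hT : substPair P x (u * x) * PowerSeries.derivativeFun (u * x)
        - substPair Q x (u * x) * PowerSeries.derivativeFun x ≠ 0) :
    (substPair P x (u * x) * PowerSeries.derivativeFun (u * x)
        - substPair Q x (u * x) * PowerSeries.derivativeFun x).order
      = (m : ℕ∞) * x.order
        + (substPair A₁ x u * PowerSeries.derivativeFun x
            + substPair B₁ x u * PowerSeries.derivativeFun u).order :=
  tangency_order_blowup_general P Q m A₁ B₁ hA hB x u hx hu
end

section
/- Let P, Q ∈ ℂ[[x,y]], b ∈ ℂ, and let γ = (x(t), y(t)) with x(t), y(t) ∈ ℂ[[t]] of positive order. Suppose that P∘γ = b·(Q∘γ) (so γ parametrizes a branch of the polar curve {P − bQ = 0}), that Q∘γ ≠ 0, and that b·y(t) − x(t) ≠ 0. Then ord( (P∘γ)·y'(t) − (Q∘γ)·x'(t) ) + 1 = ord(Q∘γ) + ord( b·y(t) − x(t) ). (For a generic b this is the identity tg₀(F, C) + 1 = (Q, C)₀ + ν₀(C) for a branch C of the generic polar curve of the foliation F defined by ω = P dy − Q dx, where tg₀ is the tangency order, (Q,C)₀ the intersection number of {Q =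 0} with C, and ν₀(C) the multiplicity of C.) -/
/-!
On the polar branch `P∘γ = b·(Q∘γ)` the contraction `(P∘γ)·y' − (Q∘γ)·x'` factors as
`(Q∘γ)·(b·y − x)'`. Orders add under multiplication, and differentiating a series without
constant term lowers its order by exactly one in characteristic zero.
-/

open PowerSeries

namespace PowerSeries

variable {R : Type*}

theorem order_derivative_add_one [CommSemiring R] [IsAddTorsionFree R] {f : R⟦X⟧}
    (hf : constantCoeff f = 0) : (d⁄dX R f).order + 1 = f.order := by
  rcases eq_or_ne f 0 with rfl | hf0
  · simp
  obtain ⟨n, hn⟩ : ∃ n : ℕ, f.order = n := ⟨_, (coe_toNat_order hf0).symm⟩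
  obtain ⟨hcoeff, hlow⟩ := order_eq_nat.1 hn
  obtain _ | m := n
  · exact absurd (by simpa using hf) hcoeff
  suffices (d⁄dX R f).order = m by rw [this, hn]; norm_cast
  refine order_eq_nat.2 ⟨?_, fun i hi => ?_⟩
  · rw [coeff_derivative, mul_comm, ← Nat.cast_succ, ← nsmul_eq_mul]
    exact (nsmul_eq_zero_iff_right m.succ_ne_zero).not.2 hcoeff
  · rw [coeff_derivative, hlow (i + 1) (by omega), zero_mul]

theorem mul_derivative_sub_mul_derivative_of_eq_C_mul [CommRing R] {p q x y : R⟦X⟧} {b : R}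
    (h : p = C b * q) :
    p * d⁄dX R y - q * d⁄dX R x = q * d⁄dX R (C b * y - x) := by
  rw [h, map_sub, Derivation.leibniz, derivative_C, smul_zero, add_zero, smul_eq_mul]
  ring

end PowerSeries

theorem polar_tangency_identity_general (P Q : MvPowerSeries (Fin 2) ℂ) (b : ℂ)
    (x y : PowerSeries ℂ)
    (hx : PowerSeries.coeff 0 x = 0) (hy : PowerSeries.coeff 0 y = 0)
    (hpolar : substPair P x y = PowerSeries.C b * substPair Q x y) :
    (substPair P x y * PowerSeries.derivativeFun y
        - substPair Q x y * PowerSeries.derivativeFun x).order + 1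
      = (substPair Q x y).order + (PowerSeries.C b * y - x).order := by
  have hconst : constantCoeff (C b * y - x) = 0 := by
    rw [coeff_zero_eq_constantCoeff_apply] at hx hy
    simp [hx, hy]
  calc _ = (substPair Q x y * d⁄dX ℂ (C b * y - x)).order + 1 := by
        rw [← mul_derivative_sub_mul_derivative_of_eq_C_mul hpolar]; rfl
    _ = _ := by rw [order_mul, add_assoc, order_derivative_add_one hconst]

/-- if `γ = (x(t),y(t))` (positive order) parametrizes a branch of the polar
curve `{P − bQ = 0}`, i.e. `P∘γ = b·(Q∘γ)`, with `Q∘γ ≠ 0` and `b·y(t) − x(t) ≠ 0`, then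
`ord((P∘γ)·y' − (Q∘γ)·x') + 1 = ord(Q∘γ) + ord(b·y(t) − x(t))`, i.e.
`tg₀(F,C) + 1 = (Q,C)₀ + ν₀(C)` for a branch `C` of the generic polar curve. -/
theorem polar_tangency_identity (P Q : MvPowerSeries (Fin 2) ℂ) (b : ℂ)
    (x y : PowerSeries ℂ)
    (hx : PowerSeries.coeff 0 x = 0) (hy : PowerSeries.coeff 0 y = 0)
    (hpolar : substPair P x y = PowerSeries.C b * substPair Q x y)
    (hQ : substPair Q x y ≠ 0)
    (hby : PowerSeries.C b * y - x ≠ 0) :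
    (substPair P x y * PowerSeries.derivativeFun y
        - substPair Q x y * PowerSeries.derivativeFun x).order + 1
      = (substPair Q x y).order + (PowerSeries.C b * y - x).order :=
  polar_tangency_identity_general P Q b x y hx hy hpolar
end
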